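/- Let N be a quantum channel on d×d complex matrices, γ a positive-definite density matrix with N(γ) positive definite, θ a real number, and R_γ^θ the rotated Petz recovery map. Fix orthonormal eigenbases γ = ∑_i r_i |i⟩⟨i| and N(γ) = ∑_{k'} r'_{k'} |k'⟩⟨k'| with all r_i, r'_{k'} > 0, and define T_{ij→k'l'} = ⟨k'| N(|i⟩⟨j|) |l'⟩ and T̃^θ_{ij←k'l'} = ⟨i| R_γ^θ(|k'⟩⟨l'|) |j⟩. Then for all indices i, j, k', l': T_{ij→k'l'} = conj(T̃^θ_{ij←k'l'}) · (r'_{k'} r'_{l'} / (r_i r_j))^{1/2} · exp(iθ · log(r_i r'_{l'} / (r_j r'_{k'}))). In particular, the ratio of forward to conjugated backward transition amplitude acquires a phase proportional to the difference of coherence modes ω_{ij} = log r_j − log r_i and ω'_{k'l'} = log r'_{l'} − log r'_{k'}. -/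

import Mathlib

open Matrix
open scoped ComplexOrder

/-- ⟨v|A|w⟩ -/
noncomputable def braket {d : ℕ} (v : Fin d → ℂ) (A : Matrix (Fin d) (Fin d) ℂ)
    (w : Fin d → ℂ) : ℂ :=
  dotProduct (star v) (A.mulVec w)

/-- |v⟩⟨w| -/
noncomputable def ketbra {d : ℕ} (v w : Fin d → ℂ) : Matrix (Fin d) (Fin d) ℂ :=
  Matrix.vecMulVec v (star w)

/-- A quantum channel in Kraus form: N(X) = ∑ m, K m * X * (K m)ᴴ. -/
noncomputable def krausMap {d : ℕ} {ι : Type} [Fintype ι] (K : ι → Matrix (Fin d) (Fin d) ℂ)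
    (X : Matrix (Fin d) (Fin d) ℂ) : Matrix (Fin d) (Fin d) ℂ :=
  ∑ m, K m * X * (K m)ᴴ

/-- The adjoint map: N†(X) = ∑ m, (K m)ᴴ * X * K m. -/
noncomputable def krausAdj {d : ℕ} {ι : Type} [Fintype ι] (K : ι → Matrix (Fin d) (Fin d) ℂ)
    (X : Matrix (Fin d) (Fin d) ℂ) : Matrix (Fin d) (Fin d) ℂ :=
  ∑ m, (K m)ᴴ * X * K m

/-- An orthonormal family of vectors in ℂ^d. -/
def IsONB {d : ℕ} (e : Fin d → Fin d → ℂ) : Prop :=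
  ∀ i j, dotProduct (star (e i)) (e j) = if i = j then 1 else 0

/-- For A = ∑ i, r i • |e i⟩⟨e i| with `e` orthonormal and `r` positive, the complex
matrix power A^z = exp (z log A) is given by A^z = ∑ i, (r i)^z • |e i⟩⟨e i|. -/
noncomputable def projPow {d : ℕ} (r : Fin d → ℝ) (e : Fin d → Fin d → ℂ) (z : ℂ) :
    Matrix (Fin d) (Fin d) ℂ :=
  ∑ i, ((r i : ℂ) ^ z) • ketbra (e i) (e i)

/-- The rotated Petz recovery map, expressed through the eigendecompositions
γ = ∑ r_i |i⟩⟨i| and N(γ) = ∑ r'_k |k'⟩⟨k'|: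
R_γ^θ(X) = γ^{1/2+iθ} N†(N(γ)^{-1/2-iθ} X N(γ)^{-1/2+iθ}) γ^{1/2-iθ}. -/
noncomputable def rotPetzB {d : ℕ} {ι : Type} [Fintype ι] (K : ι → Matrix (Fin d) (Fin d) ℂ)
    (r : Fin d → ℝ) (e : Fin d → Fin d → ℂ) (r' : Fin d → ℝ) (f : Fin d → Fin d → ℂ)
    (θ : ℝ) (X : Matrix (Fin d) (Fin d) ℂ) : Matrix (Fin d) (Fin d) ℂ :=
  projPow r e (1/2 + θ * Complex.I) *
    krausAdj K (projPow r' f (-(1/2) - θ * Complex.I) * X *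
      projPow r' f (-(1/2) + θ * Complex.I)) *
    projPow r e (1/2 - θ * Complex.I)

/-!
Both amplitudes are sums over the Kraus operators of the same products:
`⟨k'|N(|i⟩⟨j|)|l'⟩ = ∑ₘ ⟨k'|Kₘ|i⟩ conj ⟨l'|Kₘ|j⟩`,
while `⟨i|N†(|k'⟩⟨l'|)|j⟩` is its conjugate.
The spectral powers in the rotated Petz map act diagonally on the eigenvectors, so
`⟨i|R_γ^θ(|k'⟩⟨l'|)|j⟩` is `⟨i|N†(|k'⟩⟨l'|)|j⟩` times the weight
`r_i^{1/2+iθ} r_j^{1/2-iθ} r'_{k'}^{-1/2-iθ} r'_{l'}^{-1/2+iθ}`. Writing every factor as an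
exponential of logarithms, the conjugated weight is exactly the inverse of
`√(r'_{k'} r'_{l'} / (r_i r_j)) exp(iθ log(r_i r'_{l'} / (r_j r'_{k'})))`.
-/

section Braket

variable {d : ℕ}

lemma braket_sum {κ : Type*} (s : Finset κ) (v w : Fin d → ℂ)
    (A : κ → Matrix (Fin d) (Fin d) ℂ) :
    braket v (∑ m ∈ s, A m) w = ∑ m ∈ s, braket v (A m) w := by
  simp only [braket, sum_mulVec, dotProduct_sum]

lemma braket_smul (c : ℂ) (v w : Fin d → ℂ) (A : Matrix (Fin d) (Fin d) ℂ) :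
    braket v (c • A) w = c * braket v A w := by
  rw [braket, braket, smul_mulVec, dotProduct_smul, smul_eq_mul]

lemma star_braket (v w : Fin d → ℂ) (A : Matrix (Fin d) (Fin d) ℂ) :
    star (braket v A w) = braket w Aᴴ v := by
  rw [braket, braket, dotProduct_mulVec (star w), ← star_mulVec, star_dotProduct (A *ᵥ w)]

lemma braket_mul_ketbra_mul (a v w x : Fin d → ℂ) (A B : Matrix (Fin d) (Fin d) ℂ) :
    braket a (A * ketbra v w * B) x = braket a A v * braket w B x := by
  rw [braket, ketbra, ← mulVec_mulVec, ← mulVec_mulVec, vecMulVec_mulVec, op_smul_eq_smul,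
    mulVec_smul, dotProduct_smul, smul_eq_mul, mul_comm]
  rfl

end Braket

section Kraus

variable {d : ℕ} {ι : Type} [Fintype ι] (K : ι → Matrix (Fin d) (Fin d) ℂ)

lemma krausAdj_smul (c : ℂ) (X : Matrix (Fin d) (Fin d) ℂ) :
    krausAdj K (c • X) = c • krausAdj K X := by
  simp only [krausAdj, Matrix.mul_smul, Matrix.smul_mul, Finset.smul_sum]

lemma braket_krausMap_ketbra (a b c x : Fin d → ℂ) :
    braket a (krausMap K (ketbra b c)) x = ∑ m, braket a (K m) b * star (braket x (K m) c) := by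
  simp only [krausMap, braket_sum, braket_mul_ketbra_mul, ← star_braket]

lemma braket_krausAdj_ketbra (a b c x : Fin d → ℂ) :
    braket a (krausAdj K (ketbra b c)) x = ∑ m, star (braket b (K m) a) * braket c (K m) x := by
  simp only [krausAdj, braket_sum, braket_mul_ketbra_mul, ← star_braket]

lemma braket_krausMap_ketbra_eq_star (a b c x : Fin d → ℂ) :
    braket a (krausMap K (ketbra b c)) x = star (braket b (krausAdj K (ketbra a x)) c) := by
  simp only [braket_krausMap_ketbra, braket_krausAdj_ketbra, star_sum, star_mul', star_star,
    mul_comm]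

end Kraus

section SpectralPower

variable {d : ℕ} {r : Fin d → ℝ} {e : Fin d → Fin d → ℂ}

lemma projPow_mulVec (he : IsONB e) (z : ℂ) (j : Fin d) :
    projPow r e z *ᵥ e j = ((r j : ℂ) ^ z) • e j := by
  simp only [projPow, ketbra, sum_mulVec, smul_mulVec, vecMulVec_mulVec, op_smul_eq_smul,
    fun a => he a j, ite_smul, one_smul, zero_smul, smul_ite, smul_zero, Finset.sum_ite_eq',
    Finset.mem_univ, if_true]

lemma star_vecMul_projPow (he : IsONB e) (z : ℂ) (i : Fin d) :
    star (e i) ᵥ* projPow r e z = ((r i : ℂ) ^ z) • star (e i) := by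
  simp only [projPow, ketbra, vecMul_sum, vecMul_smul, vecMul_vecMulVec, fun a => he i a,
    ite_smul, one_smul, zero_smul, smul_ite, smul_zero, Finset.sum_ite_eq, Finset.mem_univ,
    if_true]

lemma braket_projPow_mul_mul_projPow (he : IsONB e) (z z' : ℂ) (i j : Fin d)
    (M : Matrix (Fin d) (Fin d) ℂ) :
    braket (e i) (projPow r e z * M * projPow r e z') (e j) =
      (r i : ℂ) ^ z * (r j : ℂ) ^ z' * braket (e i) M (e j) := by
  rw [braket, ← mulVec_mulVec, projPow_mulVec he, mulVec_smul, ← mulVec_mulVec,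
    dotProduct_smul, dotProduct_mulVec, star_vecMul_projPow he, smul_dotProduct, smul_eq_mul,
    smul_eq_mul, braket]
  ring

lemma projPow_mul_ketbra_mul_projPow (he : IsONB e) (z z' : ℂ) (k l : Fin d) :
    projPow r e z * ketbra (e k) (e l) * projPow r e z' =
      ((r k : ℂ) ^ z * (r l : ℂ) ^ z') • ketbra (e k) (e l) := by
  rw [ketbra, mul_vecMulVec, vecMulVec_mul, projPow_mulVec he, star_vecMul_projPow he,
    smul_vecMulVec, vecMulVec_smul, smul_smul]

end SpectralPower

lemma braket_rotPetzB_ketbra {d : ℕ} {ι : Type} [Fintype ι] (K : ι → Matrix (Fin d) (Fin d) ℂ)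
    {r : Fin d → ℝ} {e : Fin d → Fin d → ℂ} (he : IsONB e) {r' : Fin d → ℝ}
    {f : Fin d → Fin d → ℂ} (hf : IsONB f) (θ : ℝ) (i j k l : Fin d) :
    braket (e i) (rotPetzB K r e r' f θ (ketbra (f k) (f l))) (e j) =
      (r i : ℂ) ^ (1/2 + θ * Complex.I) * (r j : ℂ) ^ (1/2 - θ * Complex.I) *
        ((r' k : ℂ) ^ (-(1/2) - θ * Complex.I) * (r' l : ℂ) ^ (-(1/2) + θ * Complex.I)) *
        braket (e i) (krausAdj K (ketbra (f k) (f l))) (e j) := by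
  rw [rotPetzB, braket_projPow_mul_mul_projPow he, projPow_mul_ketbra_mul_projPow hf,
    krausAdj_smul, braket_smul]
  ring

lemma star_ofReal_cpow_of_pos {x : ℝ} (hx : 0 < x) (z : ℂ) :
    star ((x : ℂ) ^ z) = Complex.exp (star z * Real.log x) := by
  rw [Complex.cpow_def_of_ne_zero (Complex.ofReal_ne_zero.mpr hx.ne'),
    ← Complex.ofReal_log hx.le, Complex.star_def, ← Complex.exp_conj, map_mul,
    Complex.conj_ofReal, mul_comm]

lemma ofReal_sqrt_of_pos {x : ℝ} (hx : 0 < x) :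
    (Real.sqrt x : ℂ) = Complex.exp (Real.log x / 2) := by
  rw [Real.sqrt_eq_rpow, Real.rpow_def_of_pos hx, Complex.ofReal_exp, Complex.ofReal_mul,
    Complex.ofReal_div, Complex.ofReal_one, Complex.ofReal_ofNat, mul_one_div]

lemma star_rotPetzWeight_mul_sqrt_mul_exp_eq_one {a b c x : ℝ} (ha : 0 < a) (hb : 0 < b)
    (hc : 0 < c) (hx : 0 < x) (θ : ℝ) :
    star ((a : ℂ) ^ (1/2 + θ * Complex.I) * (b : ℂ) ^ (1/2 - θ * Complex.I) *
        ((c : ℂ) ^ (-(1/2) - θ * Complex.I) * (x : ℂ) ^ (-(1/2) + θ * Complex.I))) *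
      (Real.sqrt (c * x / (a * b)) : ℂ) *
      Complex.exp (θ * Complex.I * (Real.log (a * x / (b * c)) : ℝ)) = 1 := by
  rw [ofReal_sqrt_of_pos (by positivity), Real.log_div (by positivity) (by positivity),
    Real.log_div (by positivity) (by positivity), Real.log_mul ha.ne' hb.ne',
    Real.log_mul hc.ne' hx.ne', Real.log_mul ha.ne' hx.ne', Real.log_mul hb.ne' hc.ne']
  simp only [star_mul', star_ofReal_cpow_of_pos ha, star_ofReal_cpow_of_pos hb,
    star_ofReal_cpow_of_pos hc, star_ofReal_cpow_of_pos hx, ← Complex.exp_add]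
  refine (congrArg Complex.exp ?_).trans Complex.exp_zero
  simp only [star_add, star_sub, star_neg, star_mul', star_div₀, star_ofNat,
    Complex.star_def, map_one, Complex.conj_I, Complex.conj_ofReal]
  push_cast
  ring

theorem rotated_quantum_information_exchange_general
    {d : ℕ} {ι : Type} [Fintype ι] (K : ι → Matrix (Fin d) (Fin d) ℂ)
    (r : Fin d → ℝ) (e : Fin d → Fin d → ℂ) (hr : ∀ i, 0 < r i) (he : IsONB e)
    (r' : Fin d → ℝ) (f : Fin d → Fin d → ℂ) (hr' : ∀ k, 0 < r' k) (hf : IsONB f)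
    (θ : ℝ) :
    ∀ i j k l : Fin d,
      braket (f k) (krausMap K (ketbra (e i) (e j))) (f l) =
        (starRingEnd ℂ) (braket (e i) (rotPetzB K r e r' f θ (ketbra (f k) (f l))) (e j)) *
          (Real.sqrt (r' k * r' l / (r i * r j)) : ℂ) *
          Complex.exp ((θ : ℂ) * Complex.I * (Real.log (r i * r' l / (r j * r' k)) : ℝ)) := by
  intro i j k l
  have hweight := star_rotPetzWeight_mul_sqrt_mul_exp_eq_one (hr i) (hr j) (hr' k) (hr' l) θ
  rw [braket_krausMap_ketbra_eq_star, braket_rotPetzB_ketbra K he hf, starRingEnd_apply,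
    star_mul']
  linear_combination (-star (braket (e i) (krausAdj K (ketbra (f k) (f l))) (e j))) * hweight

/-- forward and rotated-backward transition amplitudes satisfy
T_{ij→k'l'} = conj(T̃^θ_{ij←k'l'}) √(r'_k r'_l/(r_i r_j)) exp(iθ log(r_i r'_l/(r_j r'_k))). -/
theorem rotated_quantum_information_exchange
    {d : ℕ} {ι : Type} [Fintype ι] (K : ι → Matrix (Fin d) (Fin d) ℂ)
    (hK : ∑ m, (K m)ᴴ * K m = 1)
    (r : Fin d → ℝ) (e : Fin d → Fin d → ℂ) (hr : ∀ i, 0 < r i) (he : IsONB e)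
    (hrtr : ∑ i, r i = 1)
    (r' : Fin d → ℝ) (f : Fin d → Fin d → ℂ) (hr' : ∀ k, 0 < r' k) (hf : IsONB f)
    (hNγ : krausMap K (∑ i, ((r i : ℂ)) • ketbra (e i) (e i)) =
      ∑ k, ((r' k : ℂ)) • ketbra (f k) (f k))
    (θ : ℝ) :
    ∀ i j k l : Fin d,
      braket (f k) (krausMap K (ketbra (e i) (e j))) (f l) =
        (starRingEnd ℂ) (braket (e i) (rotPetzB K r e r' f θ (ketbra (f k) (f l))) (e j)) *
          (Real.sqrt (r' k * r' l / (r i * r j)) : ℂ) *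
          Complex.exp ((θ : ℂ) * Complex.I * (Real.log (r i * r' l / (r j * r' k)) : ℝ)) :=
  rotated_quantum_information_exchange_general K r e hr he r' f hr' hf θ
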